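/- In any infinite word σ over a pushdown alphabet, the set of positions that have no caller with a defined matching return is infinite; equivalently, in the Hintikka-sequence encoding, the proposition p_∞ holds at infinitely many positions of any infinite timed word. -/

import Mathlib

inductive SymKind where
  | call | ret | intl
deriving DecidableEq

/-- Well-matched words over a pushdown alphabet, where `k` assigns to each
letter its kind (call, return, or internal). -/
inductive WellMatched {A : Type*} (k : A → SymKind) : List A → Prop
  | nil : WellMatched k []
  | int {a : A} {s : List A} : k a = SymKind.intl → WellMatched k s →
      WellMatched k (a :: s)
  | matched {c r : A} {s s' : List A} : k c = SymKind.call → k r = SymKind.ret →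
      WellMatched k s → WellMatched k s' →
      WellMatched k (c :: (s ++ r :: s'))

/-- Number of call symbols in a finite word. -/
def callCount {A : Type*} (k : A → SymKind) (s : List A) : ℕ :=
  s.countP (fun a => decide (k a = SymKind.call))

/-- Number of return symbols in a finite word. -/
def retCount {A : Type*} (k : A → SymKind) (s : List A) : ℕ :=
  s.countP (fun a => decide (k a = SymKind.ret))

/-- The finite subword `σ[i, j-1]` of the infinite word `σ` (letters at
positions `i, i+1, ..., j-1`). -/
def wordSlice {A : Type*} (σ : ℕ → A) (i j : ℕ) : List A :=
  (List.range (j - i)).map fun n => σ (i + n)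

/-- `j` is a matching return of position `i`: `j > i`, `j` is a return
position, and the subword `σ[i+1, j-1]` is well-matched. -/
def MatchRet {A : Type*} (k : A → SymKind) (σ : ℕ → A) (i j : ℕ) : Prop :=
  i < j ∧ k (σ j) = SymKind.ret ∧ WellMatched k (wordSlice σ (i + 1) j)

/-- The abstract-successor relation `SUCC(abs, σ, i) = j`. -/
def AbsSucc {A : Type*} (k : A → SymKind) (σ : ℕ → A) (i j : ℕ) : Prop :=
  if k (σ i) = SymKind.call then MatchRet k σ i j
  else j = i + 1 ∧ k (σ (i + 1)) ≠ SymKind.ret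

/-- `j` is a candidate caller of `i`: a call position `j < i` whose abstract
successor is undefined or greater than `i`. -/
def CallerCand {A : Type*} (k : A → SymKind) (σ : ℕ → A) (i j : ℕ) : Prop :=
  j < i ∧ k (σ j) = SymKind.call ∧ ∀ m, AbsSucc k σ j m → i < m

/-- `j` is the caller of `i`: the greatest candidate caller. -/
def Caller {A : Type*} (k : A → SymKind) (σ : ℕ → A) (i j : ℕ) : Prop :=
  CallerCand k σ i j ∧ ∀ j', CallerCand k σ i j' → j' ≤ j

/-- `S` is a maximal abstract path (MAP): the set of positions reachable via
the abstract successor from a position `i0` with no abstract predecessor. -/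
def IsMAP {A : Type*} (k : A → SymKind) (σ : ℕ → A) (S : Set ℕ) : Prop :=
  ∃ i0, (¬ ∃ p, AbsSucc k σ p i0) ∧
    S = {j | Relation.ReflTransGen (AbsSucc k σ) i0 j}

/-- The set of positions of the (unique) maximal abstract path visiting `i`. -/
def PosA {A : Type*} (k : A → SymKind) (σ : ℕ → A) (i : ℕ) : Set ℕ :=
  {j | Relation.ReflTransGen (AbsSucc k σ) i j ∨
       Relation.ReflTransGen (AbsSucc k σ) j i}

/-- The set of positions of the caller path of `σ` from `i`. -/
def PosC {A : Type*} (k : A → SymKind) (σ : ℕ → A) (i : ℕ) : Set ℕ :=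
  {j | Relation.ReflTransGen (fun a b => Caller k σ a b) i j}

/-- The special proposition `p_∞` holds at position `p` iff `p` has no caller
whose matching return is defined. -/
def PInf {A : Type*} (k : A → SymKind) (σ : ℕ → A) (p : ℕ) : Prop :=
  ¬ ∃ c, Caller k σ p c ∧ ∃ r, MatchRet k σ c r

/-!
If `p_∞` failed from some position `N` on, every position `p > N` would have a caller `c` with a
matching return `r`, and `r > p` because the caller's abstract successor lies beyond `p`. The caller
`c'` of `r` again has a matching return, and `c' < c`: `c' = c` is impossible since the abstract
successor of `c` is `r` itself, and `c < c' < r` is impossible since a call inside the well-matched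
word `σ[c+1, r-1]` is matched before `r`. This gives an infinite descent of callers.
-/

section

variable {A : Type*} {k : A → SymKind}

theorem WellMatched.exists_ret_of_call {s u v : List A} {c : A} (h : WellMatched k s)
    (hs : s = u ++ c :: v) (hc : k c = SymKind.call) :
    ∃ w r w', v = w ++ r :: w' ∧ k r = SymKind.ret ∧ WellMatched k w := by
  induction h generalizing u v with
  | nil => simp at hs
  | @int a s ha _ ih =>
    rcases u with _ | ⟨_, u⟩
    · obtain ⟨rfl, -⟩ := List.cons.inj hs
      simp [ha] at hc
    · exact ih (List.cons.inj hs).2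
  | @matched c₀ r₀ s₀ s₀' _ hr₀ hwm₀ _ ih₀ ih₀' =>
    rcases u with _ | ⟨_, u⟩
    · obtain ⟨-, rfl⟩ := List.cons.inj hs
      exact ⟨s₀, r₀, s₀', rfl, hr₀, hwm₀⟩
    rcases List.append_eq_append_iff.mp (List.cons.inj hs).2.symm with
      ⟨_ | ⟨_, t⟩, rfl, ht⟩ | ⟨_ | ⟨_, t⟩, rfl, ht⟩
    · obtain ⟨rfl, -⟩ := List.cons.inj ht
      simp [hr₀] at hc
    · obtain ⟨rfl, rfl⟩ := List.cons.inj ht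
      obtain ⟨w, r, w', rfl, hr, hw⟩ := ih₀ rfl
      exact ⟨w, r, w' ++ r₀ :: s₀', by simp, hr, hw⟩
    · obtain ⟨rfl, -⟩ := List.cons.inj ht
      simp [hr₀] at hc
    · exact ih₀' (List.cons.inj ht).2

section wordSlice

variable (σ : ℕ → A)

theorem length_wordSlice (i j : ℕ) : (wordSlice σ i j).length = j - i := by
  simp [wordSlice]

theorem wordSlice_append_wordSlice {a m b : ℕ} (ham : a ≤ m) (hmb : m ≤ b) :
    wordSlice σ a m ++ wordSlice σ m b = wordSlice σ a b := by
  have hlen : b - a = (m - a) + (b - m) := by omega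
  simp only [wordSlice, hlen, List.range_add, List.map_append, List.map_map]
  congr 1
  refine List.map_congr_left fun n _ => ?_
  simp only [Function.comp_apply]
  congr 1
  omega

theorem wordSlice_eq_cons {m b : ℕ} (h : m < b) :
    wordSlice σ m b = σ m :: wordSlice σ (m + 1) b := by
  have hlen : b - m = (b - (m + 1)) + 1 := by omega
  simp only [wordSlice, hlen, List.range_succ_eq_map, List.map_cons, List.map_map, add_zero]
  congr 1
  refine List.map_congr_left fun n _ => ?_
  simp only [Function.comp_apply]
  congr 1
  omega

variable {σ}

theorem wordSlice_eq_append_cons {i j : ℕ} {w w' : List A} {r : A}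
    (h : wordSlice σ i j = w ++ r :: w') :
    wordSlice σ i (i + w.length) = w ∧ σ (i + w.length) = r ∧ i + w.length < j := by
  have hlen : j - i = w.length + (w'.length + 1) := by
    simpa [length_wordSlice] using congrArg List.length h
  have hj : i + w.length < j := by omega
  rw [← wordSlice_append_wordSlice σ (m := i + w.length) (by omega) hj.le,
    wordSlice_eq_cons σ hj] at h
  obtain ⟨hw, hr⟩ := List.append_inj h (by simp [length_wordSlice])
  exact ⟨hw, (List.cons.inj hr).1, hj⟩

end wordSlice

variable {σ : ℕ → A}

theorem exists_matchRet_of_wellMatched_wordSlice {a b m : ℕ}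
    (hw : WellMatched k (wordSlice σ a b)) (ham : a ≤ m) (hmb : m < b)
    (hm : k (σ m) = SymKind.call) : ∃ ρ < b, MatchRet k σ m ρ := by
  have hsplit : wordSlice σ a b = wordSlice σ a m ++ σ m :: wordSlice σ (m + 1) b := by
    rw [← wordSlice_eq_cons σ hmb, wordSlice_append_wordSlice σ ham hmb.le]
  obtain ⟨w, r, w', hv, hr, hwm⟩ := hw.exists_ret_of_call hsplit hm
  obtain ⟨hw, hσ, hlt⟩ := wordSlice_eq_append_cons hv
  exact ⟨_, hlt, by omega, hσ ▸ hr, by rwa [hw]⟩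

theorem absSucc_of_matchRet {c r : ℕ} (hc : k (σ c) = SymKind.call) (hr : MatchRet k σ c r) :
    AbsSucc k σ c r := by
  rwa [AbsSucc, if_pos hc]

theorem CallerCand.lt_matchRet {p c : ℕ} (hc : CallerCand k σ p c) {r : ℕ}
    (hr : MatchRet k σ c r) : p < r :=
  hc.2.2 r (absSucc_of_matchRet hc.2.1 hr)

theorem CallerCand.lt_of_matchRet {c r c' : ℕ} (hc' : CallerCand k σ r c')
    (hr : MatchRet k σ c r) : c' < c := by
  obtain ⟨hc'r, hc'call, hc'succ⟩ := hc'
  rcases lt_trichotomy c' c with hlt | rfl | hgt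
  · exact hlt
  · exact absurd (hc'succ r (absSucc_of_matchRet hc'call hr)) (lt_irrefl r)
  · obtain ⟨ρ, hρr, hρ⟩ :=
      exists_matchRet_of_wellMatched_wordSlice hr.2.2 (Nat.succ_le_of_lt hgt) hc'r hc'call
    exact absurd (hc'succ ρ (absSucc_of_matchRet hc'call hρ)) (not_lt.mpr hρr.le)

end

/-- in any infinite word over a pushdown alphabet, the set of
positions with no caller having a defined matching return (i.e. where `p_∞`
holds) is infinite. -/
theorem pInf_infinite {A : Type*} (k : A → SymKind) (σ : ℕ → A) :
    {p : ℕ | PInf k σ p}.Infinite := by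
  by_contra hfin
  obtain ⟨N, hN⟩ := (Set.not_infinite.mp hfin).bddAbove
  have hcaller : ∀ p, N < p → ∃ c, Caller k σ p c ∧ ∃ r, MatchRet k σ c r := fun p hNp => by
    by_contra hp
    exact (hN hp).not_gt hNp
  obtain ⟨c₀, hc₀⟩ := hcaller (N + 1) N.lt_succ_self
  obtain ⟨c, ⟨p, hNp, hc, r, hr⟩, hmin⟩ := wellFounded_lt.has_min
    {c | ∃ p, N < p ∧ Caller k σ p c ∧ ∃ r, MatchRet k σ c r} ⟨c₀, N + 1, N.lt_succ_self, hc₀⟩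
  have hNr : N < r := hNp.trans (hc.1.lt_matchRet hr)
  obtain ⟨c', hc', hr'⟩ := hcaller r hNr
  exact hmin c' ⟨r, hNr, hc', hr'⟩ (hc'.1.lt_of_matchRet hr)
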